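/- Let E be a real Banach space containing an isomorphic copy of ℓ_∞ = ℓ_∞(ℕ). Then E endowed with its weak topology σ(E,E′) is not an ℵ-space. -/

import Mathlib

open TopologicalSpace Filter Set

/-- A family `N` of subsets of a topological space `X` is a *k-network* if whenever `K ⊆ U`
with `K` compact and `U` open, there is a finite subfamily `F ⊆ N` with `K ⊆ ⋃₀ F ⊆ U`. -/
def IsKNetwork {X : Type*} [TopologicalSpace X] (N : Set (Set X)) : Prop :=
  ∀ K U : Set X, IsCompact K → IsOpen U → K ⊆ U →
    ∃ F : Set (Set X), F ⊆ N ∧ F.Finite ∧ K ⊆ ⋃₀ F ∧ ⋃₀ F ⊆ U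

/-- A family `N` of subsets of `X` is a *network* if for every `x` and every open `U ∋ x`
there is `A ∈ N` with `x ∈ A ⊆ U`. -/
def IsNetwork {X : Type*} [TopologicalSpace X] (N : Set (Set X)) : Prop :=
  ∀ (x : X) (U : Set X), IsOpen U → x ∈ U → ∃ A ∈ N, x ∈ A ∧ A ⊆ U

/-- A family of subsets is *locally finite* if every point has a neighbourhood meeting
only finitely many of its members. -/
def IsLocallyFiniteFamily {X : Type*} [TopologicalSpace X] (N : Set (Set X)) : Prop :=
  ∀ x : X, ∃ V ∈ nhds x, {A ∈ N | (A ∩ V).Nonempty}.Finite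

/-- A family of subsets is *σ-locally finite* if it is a countable union of locally finite
families. -/
def IsSigmaLocallyFinite {X : Type*} [TopologicalSpace X] (N : Set (Set X)) : Prop :=
  ∃ f : ℕ → Set (Set X), (∀ n, IsLocallyFiniteFamily (f n)) ∧ N = ⋃ n, f n

/-- An *ℵ-space* is a regular Hausdorff space with a σ-locally finite k-network. -/
def IsAlephSpace (X : Type*) [TopologicalSpace X] : Prop :=
  RegularSpace X ∧ T2Space X ∧ ∃ N : Set (Set X), IsSigmaLocallyFinite N ∧ IsKNetwork N

/-- An *ℵ₀-space* is a regular Hausdorff space with a countable k-network. -/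
def IsAleph0Space (X : Type*) [TopologicalSpace X] : Prop :=
  RegularSpace X ∧ T2Space X ∧ ∃ N : Set (Set X), N.Countable ∧ IsKNetwork N

/-! ℵ-spaces are perfect: if `N = ⋃ₙ Nₙ` is a σ-locally finite network and `C` is closed, the
closures of the members of `Nₙ` that miss `C` have closed union `Gₙ`, and regularity gives
`C = ⋂ₙ Gₙᶜ`. So it suffices to exhibit a weakly closed set in `E` that is not a weak `G_δ`.

Take the norm closure of `T c₀₀`, where `c₀₀ ⊆ ℓ_∞` is the space of finitely supported sequences.
Being convex, it is weakly closed, and it stays at distance `≥ c` from `T 𝟙_A` for every infinite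
`A`. On the other hand, a weak `G_δ` set `⋂ₙ Wₙ` containing every `T 𝟙_H`, `H` finite, contains
some `T 𝟙_A` with `A` infinite. A weak neighbourhood is controlled by finitely many functionals,
and a bounded functional on `ℓ_∞` has bounded total mass on disjoint sets, so it is small on all
subsets of some infinite `R' ⊆ R`. This lets one grow a finite set `H` one point at a time while
shrinking an infinite reservoir `R`, so that at stage `n` every set between `H` and `H ∪ R` has
its indicator in `W₀, …, Wₙ`; the union of the `H`'s is the required `A`. -/

open Function
open scoped Topology ENNReal lp

section AlephSpace

variable {X : Type*} [TopologicalSpace X]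

theorem IsKNetwork.isNetwork {N : Set (Set X)} (hN : IsKNetwork N) : IsNetwork N := by
  intro x U hU hx
  obtain ⟨F, hFN, -, hxF, hFU⟩ := hN {x} U isCompact_singleton hU (singleton_subset_iff.2 hx)
  obtain ⟨A, hAF, hxA⟩ := hxF rfl
  exact ⟨A, hFN hAF, hxA, (subset_sUnion_of_mem hAF).trans hFU⟩

theorem IsLocallyFiniteFamily.mono {N N' : Set (Set X)} (hN : IsLocallyFiniteFamily N)
    (h : N' ⊆ N) : IsLocallyFiniteFamily N' := fun x ↦
  let ⟨V, hV, hfin⟩ := hN x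
  ⟨V, hV, hfin.subset fun _ hA ↦ ⟨h hA.1, hA.2⟩⟩

theorem IsLocallyFiniteFamily.locallyFinite {N : Set (Set X)} (hN : IsLocallyFiniteFamily N) :
    LocallyFinite ((↑) : N → Set X) := fun x ↦
  let ⟨V, hV, hfin⟩ := hN x
  ⟨V, hV, (hfin.preimage Subtype.val_injective.injOn).subset fun A hA ↦ ⟨A.2, hA⟩⟩

theorem IsClosed.isGδ_of_isNetwork [RegularSpace X] {N : Set (Set X)}
    (hσ : IsSigmaLocallyFinite N) (hN : IsNetwork N) {C : Set X} (hC : IsClosed C) : IsGδ C := by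
  obtain ⟨f, hf, rfl⟩ := hσ
  let G : ℕ → Set X := fun n ↦ ⋃ A : {A ∈ f n | Disjoint (closure A) C}, closure (A : Set X)
  have hG : ∀ n, IsClosed (G n) := fun n ↦
    ((hf n).mono (sep_subset _ _)).locallyFinite.closure.isClosed_iUnion fun _ ↦ isClosed_closure
  suffices C = ⋂ n, (G n)ᶜ from this ▸ IsGδ.iInter_of_isOpen fun n ↦ (hG n).isOpen_compl
  refine (subset_iInter fun n ↦ (disjoint_iUnion_left.2 fun A ↦ A.2.2).subset_compl_left).antisymm
    fun x hx ↦ not_not.1 fun hxC ↦ ?_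
  obtain ⟨S, hS, hS_closed, hSC⟩ := exists_mem_nhds_isClosed_subset (hC.isOpen_compl.mem_nhds hxC)
  obtain ⟨A, hA, hxA, hAS⟩ := hN x (interior S) isOpen_interior (mem_interior_iff_mem_nhds.2 hS)
  obtain ⟨n, hAn⟩ := mem_iUnion.1 hA
  have hAC : Disjoint (closure A) C :=
    Set.disjoint_left.2 fun _ hy ↦ hSC (closure_minimal (hAS.trans interior_subset) hS_closed hy)
  exact mem_iInter.1 hx n (mem_iUnion.2 ⟨⟨A, hAn, hAC⟩, subset_closure hxA⟩)

theorem IsAlephSpace.isGδ_of_isClosed (hX : IsAlephSpace X) {C : Set X} (hC : IsClosed C) :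
    IsGδ C := by
  obtain ⟨_, -, N, hσ, hN⟩ := hX
  exact hC.isGδ_of_isNetwork hσ hN.isNetwork

end AlephSpace

theorem WeakSpace.exists_finset_of_mem_nhds {V : Type*} [AddCommGroup V] [TopologicalSpace V]
    [Module ℝ V] {W : Set (WeakSpace ℝ V)} {x : V} (hW : W ∈ 𝓝 (toWeakSpace ℝ V x)) :
    ∃ (Φ : Finset (StrongDual ℝ V)) (r : ℝ), 0 < r ∧
      ∀ y : V, (∀ ψ ∈ Φ, |ψ y - ψ x| < r) → toWeakSpace ℝ V y ∈ W := by
  obtain ⟨Φ, r, hr, hball⟩ :=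
    ((topDualPairing ℝ V).flip.weakBilin_withSeminorms.mem_nhds_iff _ W).1 hW
  refine ⟨Φ, r, hr, fun y hy ↦ hball ((Seminorm.mem_ball _).2 ?_)⟩
  refine Seminorm.finset_sup_apply_lt hr fun ψ hψ ↦ ?_
  calc ‖ψ (y - x)‖ = |ψ y - ψ x| := congrArg abs (map_sub ψ y x)
    _ < r := hy ψ hψ

theorem map_notMem_closure_image {F G : Type*} [SeminormedAddCommGroup F]
    [SeminormedAddCommGroup G] {𝓕 : Type*} [FunLike 𝓕 F G] [AddMonoidHomClass 𝓕 F G] (T : 𝓕)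
    {c : ℝ} (hc : 0 < c) (hT : ∀ x, c * ‖x‖ ≤ ‖T x‖) {s : Set F} {x : F} {r : ℝ} (hr : 0 < r)
    (hx : ∀ y ∈ s, r ≤ ‖x - y‖) : T x ∉ closure (T '' s) := by
  rw [Metric.mem_closure_iff]
  push Not
  refine ⟨c * r, mul_pos hc hr, ?_⟩
  rintro _ ⟨y, hy, rfl⟩
  rw [dist_eq_norm, ← map_sub]
  exact (mul_le_mul_of_nonneg_left (hx y hy) hc.le).trans (hT _)

theorem iSup_mem_Icc_of_antitone_Icc {α : Type*} [CompleteLattice α] {a b : ℕ → α}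
    (hab : ∀ n, a n ≤ b n) (h : Antitone fun n ↦ Icc (a n) (b n)) (n : ℕ) :
    ⨆ k, a k ∈ Icc (a n) (b n) := by
  refine ⟨le_iSup a n, iSup_le fun k ↦ ?_⟩
  rcases le_total k n with hkn | hnk
  · exact (h hkn ⟨le_rfl, hab n⟩).1.trans (hab n)
  · exact (h hnk ⟨le_rfl, hab k⟩).2

section EllInfty

variable {ι : Type*}

noncomputable def lpIndicator (S : Set ι) : ℓ^∞(ι, ℝ) :=
  ⟨S.indicator 1, memℓp_infty ⟨1, by
    rintro _ ⟨i, rfl⟩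
    simpa using norm_indicator_le_norm_self (1 : ι → ℝ) i⟩⟩

@[simp]
theorem lpIndicator_apply (S : Set ι) (i : ι) : lpIndicator S i = S.indicator 1 i := rfl

theorem norm_lpIndicator_le (S : Set ι) : ‖lpIndicator S‖ ≤ 1 :=
  lp.norm_le_of_forall_le zero_le_one fun i ↦ by
    simpa using norm_indicator_le_norm_self (1 : ι → ℝ) i

theorem lpIndicator_sub_lpIndicator {H A : Set ι} (h : H ⊆ A) :
    lpIndicator A - lpIndicator H = lpIndicator (A \ H) := by
  ext i
  simp [indicator_sdiff h]

theorem lpIndicator_biUnion {κ : Type*} (F : Finset κ) {S : κ → Set ι}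
    (hS : (F : Set κ).PairwiseDisjoint S) :
    lpIndicator (⋃ k ∈ F, S k) = ∑ k ∈ F, lpIndicator (S k) := by
  ext i
  rw [lp.coeFn_sum, Finset.sum_apply]
  simp [Finset.indicator_biUnion_apply F S hS]

theorem abs_apply_lpIndicator_le (ψ : StrongDual ℝ ℓ^∞(ι, ℝ)) (S : Set ι) :
    |ψ (lpIndicator S)| ≤ ‖ψ‖ :=
  (ψ.le_opNorm _).trans (mul_le_of_le_one_right (norm_nonneg ψ) (norm_lpIndicator_le S))

/-- `ψ` has total mass at most `‖ψ‖` on disjoint sets. -/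
theorem finite_setOf_exists_subset_lt_apply_lpIndicator (ψ : StrongDual ℝ ℓ^∞(ι, ℝ))
    {κ : Type*} {P : κ → Set ι} (hP : Pairwise (Disjoint on P)) {ε : ℝ} (hε : 0 < ε) :
    {k | ∃ S ⊆ P k, ε < ψ (lpIndicator S)}.Finite := by
  by_contra hinf
  obtain ⟨n, hn⟩ := exists_nat_gt (‖ψ‖ / ε)
  obtain ⟨F, hF, rfl⟩ := Set.Infinite.exists_subset_card_eq hinf n
  choose! S hSP hSε using fun k (hk : k ∈ F) ↦ hF hk
  have hS : (F : Set κ).PairwiseDisjoint S := fun k hk l hl hkl ↦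
    (hP hkl).mono (hSP k hk) (hSP l hl)
  have : F.card * ε ≤ ‖ψ‖ := calc
    F.card * ε = ∑ k ∈ F, ε := by simp
    _ ≤ ∑ k ∈ F, ψ (lpIndicator (S k)) := Finset.sum_le_sum fun k hk ↦ (hSε k hk).le
    _ = ψ (lpIndicator (⋃ k ∈ F, S k)) := by rw [lpIndicator_biUnion F hS, map_sum]
    _ ≤ ‖ψ‖ := (le_abs_self _).trans (abs_apply_lpIndicator_le ψ _)
  rw [div_lt_iff₀ hε] at hn
  linarith

/-- Split `R` into infinitely many disjoint infinite pieces: all but finitely many of them work. -/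
theorem Set.Infinite.exists_infinite_subset_abs_apply_lpIndicator_le {R : Set ι}
    (hR : R.Infinite) (Φ : Finset (StrongDual ℝ ℓ^∞(ι, ℝ))) {ε : ℝ} (hε : 0 < ε) :
    ∃ R' ⊆ R, R'.Infinite ∧ ∀ ψ ∈ Φ, ∀ S ⊆ R', |ψ (lpIndicator S)| ≤ ε := by
  let e : ℕ × ℕ → ι := fun p ↦ hR.natEmbedding R (Nat.pairEquiv p)
  have he : Injective e :=
    Subtype.val_injective.comp ((hR.natEmbedding R).injective.comp Nat.pairEquiv.injective)
  let P : ℕ → Set ι := fun k ↦ range fun m ↦ e (k, m)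
  have hP : Pairwise (Disjoint on P) := fun k l hkl ↦ Set.disjoint_left.2 <| by
    rintro _ ⟨m, rfl⟩ ⟨m', hm'⟩
    exact hkl (congrArg Prod.fst (he hm')).symm
  have hbad : {k | ∃ ψ ∈ Φ, ∃ S ⊆ P k, ε < |ψ (lpIndicator S)|}.Finite := by
    refine (Φ.finite_toSet.biUnion fun ψ _ ↦
      (finite_setOf_exists_subset_lt_apply_lpIndicator ψ hP hε).union
        (finite_setOf_exists_subset_lt_apply_lpIndicator (-ψ) hP hε)).subset ?_
    rintro k ⟨ψ, hψ, S, hS, hlt⟩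
    exact mem_biUnion hψ ((lt_abs.1 hlt).imp (fun h ↦ ⟨S, hS, h⟩) fun h ↦ ⟨S, hS, h⟩)
  obtain ⟨k, hk⟩ := hbad.infinite_compl.nonempty
  refine ⟨P k, range_subset_iff.2 fun m ↦ (hR.natEmbedding R _).2,
    infinite_range_of_injective (he.comp (Prod.mk_right_injective k)), ?_⟩
  exact fun ψ hψ S hS ↦ not_lt.1 fun h ↦ hk ⟨ψ, hψ, S, hS, h⟩

theorem exists_infinite_subset_forall_lpIndicator_mem {W : Set (WeakSpace ℝ ℓ^∞(ι, ℝ))}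
    {H : Set ι} (hW : W ∈ 𝓝 (toWeakSpace ℝ _ (lpIndicator H))) {R : Set ι} (hR : R.Infinite) :
    ∃ R' ⊆ R, R'.Infinite ∧ ∀ A ∈ Icc H (H ∪ R'), toWeakSpace ℝ _ (lpIndicator A) ∈ W := by
  obtain ⟨Φ, r, hr, hΦ⟩ := WeakSpace.exists_finset_of_mem_nhds hW
  obtain ⟨R', hR'R, hR', hsmall⟩ :=
    hR.exists_infinite_subset_abs_apply_lpIndicator_le Φ (half_pos hr)
  refine ⟨R', hR'R, hR', fun A ⟨hHA, hAR'⟩ ↦ hΦ _ fun ψ hψ ↦ ?_⟩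
  calc |ψ (lpIndicator A) - ψ (lpIndicator H)| = |ψ (lpIndicator (A \ H))| := by
        rw [← map_sub, lpIndicator_sub_lpIndicator hHA]
    _ ≤ r / 2 := hsmall ψ hψ _ (sdiff_subset_iff.2 hAR')
    _ < r := half_lt_self hr

theorem IsGδ.exists_infinite_lpIndicator_mem [Infinite ι] {G : Set (WeakSpace ℝ ℓ^∞(ι, ℝ))}
    (hG : IsGδ G) (hfin : ∀ H : Finset ι, toWeakSpace ℝ _ (lpIndicator H) ∈ G) :
    ∃ A : Set ι, A.Infinite ∧ toWeakSpace ℝ _ (lpIndicator A) ∈ G := by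
  classical
  obtain ⟨W, hW, rfl⟩ := isGδ_iff_eq_iInter_nat.1 hG
  have step : ∀ n (p : Finset ι × {R : Set ι // R.Infinite}),
      ∃ q : Finset ι × {R : Set ι // R.Infinite}, p.1 ⊂ q.1 ∧
        Icc (q.1 : Set ι) (q.1 ∪ q.2) ⊆ Icc (p.1 : Set ι) (p.1 ∪ p.2) ∧
        ∀ A ∈ Icc (q.1 : Set ι) (q.1 ∪ q.2), toWeakSpace ℝ _ (lpIndicator A) ∈ W n := by
    rintro n ⟨H, R, hR⟩
    obtain ⟨R', hR'R, hR', hmem⟩ := exists_infinite_subset_forall_lpIndicator_mem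
      ((hW n).mem_nhds (mem_iInter.1 (hfin H) n)) hR
    obtain ⟨a, haR', haH⟩ := (hR'.sdiff H.finite_toSet).nonempty
    have hshrink : Icc (↑(insert a H)) (↑(insert a H) ∪ R') ⊆ Icc (H : Set ι) (H ∪ R') := by
      rw [Finset.coe_insert, insert_union, insert_eq_of_mem (mem_union_right _ haR')]
      exact Icc_subset_Icc_left (subset_insert _ _)
    refine ⟨(insert a H, ⟨R', hR'⟩), Finset.ssubset_insert haH, ?_, fun A hA ↦ hmem A (hshrink hA)⟩
    exact hshrink.trans (Icc_subset_Icc_right (union_subset_union_right _ hR'R))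
  choose next hnext_ssubset hnext_Icc hnext_mem using step
  let p : ℕ → Finset ι × {R : Set ι // R.Infinite} := fun n ↦
    Nat.rec (∅, ⟨univ, infinite_univ⟩) next n
  let H : ℕ → Set ι := fun n ↦ (p n).1
  have hH : StrictMono H := strictMono_nat_of_lt_succ fun n ↦
    Finset.coe_ssubset.2 (hnext_ssubset n (p n))
  have hIcc : Antitone fun n ↦ Icc (H n) (H n ∪ (p n).2) :=
    antitone_nat_of_succ_le fun n ↦ hnext_Icc n (p n)
  refine ⟨⋃ n, H n, fun hAfin ↦ ?_, mem_iInter.2 fun n ↦ hnext_mem n (p n) _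
    (iSup_mem_Icc_of_antitone_Icc (fun _ ↦ subset_union_left) hIcc (n + 1))⟩
  refine infinite_range_of_injective hH.injective (hAfin.finite_subsets.subset ?_)
  rintro _ ⟨n, rfl⟩
  exact subset_iUnion H n

def finitelySupported : Submodule ℝ ℓ^∞(ι, ℝ) where
  carrier := {x | ∀ᶠ i in cofinite, x i = 0}
  add_mem' {x y} (hx : ∀ᶠ i in cofinite, x i = 0) (hy : ∀ᶠ i in cofinite, y i = 0) :=
    (hx.and hy).mono fun i hi ↦ by simp [hi.1, hi.2]
  zero_mem' := by simp
  smul_mem' c x (hx : ∀ᶠ i in cofinite, x i = 0) := hx.mono fun i hi ↦ by simp [hi]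

theorem mem_finitelySupported {x : ℓ^∞(ι, ℝ)} :
    x ∈ finitelySupported ↔ ∀ᶠ i in cofinite, x i = 0 := Iff.rfl

theorem lpIndicator_mem_finitelySupported {H : Set ι} (hH : H.Finite) :
    lpIndicator H ∈ finitelySupported :=
  hH.eventually_cofinite_notMem.mono fun i hi ↦ by simp [hi]

theorem one_le_norm_lpIndicator_sub {A : Set ι} (hA : A.Infinite) {x : ℓ^∞(ι, ℝ)}
    (hx : x ∈ finitelySupported) : 1 ≤ ‖lpIndicator A - x‖ := by
  obtain ⟨i, hxi, hiA⟩ :=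
    ((mem_finitelySupported.1 hx).and_frequently hA.frequently_cofinite).exists
  simpa [hxi, hiA] using lp.norm_apply_le_norm ENNReal.top_ne_zero (lpIndicator A - x) i

end EllInfty

theorem banach_with_ellInfty_copy_weak_not_aleph_general
    (E : Type) [NormedAddCommGroup E] [NormedSpace ℝ E]
    (h : ∃ (T : lp (fun _ : ℕ => ℝ) ⊤ →L[ℝ] E) (c : ℝ), 0 < c ∧
        ∀ x : lp (fun _ : ℕ => ℝ) ⊤, c * ‖x‖ ≤ ‖T x‖) :
    ¬ IsAlephSpace (WeakSpace ℝ E) := by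
  intro hE
  obtain ⟨T, c, hc, hT⟩ := h
  have hconv : Convex ℝ (T '' finitelySupported (ι := ℕ)) := by
    simpa using (finitelySupported.map T.toLinearMap).convex
  have hC : IsClosed (toWeakSpace ℝ E '' closure (T '' finitelySupported (ι := ℕ))) := by
    rw [hconv.toWeakSpace_closure ℝ]
    exact isClosed_closure
  obtain ⟨A, hA, y, hy, hyA⟩ := ((hE.isGδ_of_isClosed hC).preimage
    (WeakSpace.map T).continuous).exists_infinite_lpIndicator_mem fun H ↦
      ⟨_, subset_closure ⟨_, lpIndicator_mem_finitelySupported H.finite_toSet, rfl⟩, rfl⟩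
  have hyA : y = T (lpIndicator A) := hyA
  exact map_notMem_closure_image T hc hT one_pos
    (fun x hx ↦ one_le_norm_lpIndicator_sub hA hx) (hyA ▸ hy)

/-- A real Banach space containing an isomorphic copy of `ℓ_∞(ℕ)` is not an ℵ-space in its
weak topology. -/
theorem banach_with_ellInfty_copy_weak_not_aleph
    (E : Type) [NormedAddCommGroup E] [NormedSpace ℝ E] [CompleteSpace E]
    (h : ∃ (T : lp (fun _ : ℕ => ℝ) ⊤ →L[ℝ] E) (c : ℝ), 0 < c ∧
        ∀ x : lp (fun _ : ℕ => ℝ) ⊤, c * ‖x‖ ≤ ‖T x‖) :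
    ¬ IsAlephSpace (WeakSpace ℝ E) :=
  banach_with_ellInfty_copy_weak_not_aleph_general E h
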